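/- arXiv:2004.00695 — 3 statements merged into one kernel-verified Lean document; each statement's English description precedes it below -/
import Mathlib

section
/- Let q ≥ 1, m₁ ≥ 1, m₂ ≥ 1 be integers. Let M₁ be an (m₁q)×(m₁q) complex matrix satisfying the Bell symmetry condition (symm) with parameters (m₁, q), and let M₂ be an (m₂q)×(m₂q) complex matrix all of whose entries are real. Then the Kronecker product M = M₁ ⊗ M₂, of order m₁m₂q², satisfies the Bell symmetry condition (symm) with parameters (m₁m₂q, q): for all 0 ≤ s,t ≤ q−1 and 0 ≤ x,y ≤ m₁m₂q−1, M_{m₁m₂q·[q−s]_q + x, m₁m₂q·[q−t]_q + y} = conj(M_{m₁m₂q·s + x, m₁m₂q·t + y}). -/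
open scoped BigOperators

/-- The index `m*s + x` as an element of `Fin (m*q)`. -/
def idx (m q : ℕ) (x : Fin m) (s : Fin q) : Fin (m * q) :=
  ⟨m * s.val + x.val, by
    have h1 : m * s.val + x.val < m * (s.val + 1) := by
      rw [Nat.mul_succ]; exact Nat.add_lt_add_left x.isLt _
    exact lt_of_lt_of_le h1 (Nat.mul_le_mul_left m s.isLt)⟩

/-- `[q - s]_q`, the residue of `q - s` modulo `q`, as an element of `Fin q`. -/
def negMod {q : ℕ} (s : Fin q) : Fin q :=
  ⟨(q - s.val) % q, Nat.mod_lt _ s.pos⟩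

/-- The Bell symmetry condition (symm):
`M_{m[q-s]_q+x, m[q-t]_q+y} = conj (M_{ms+x, mt+y})` for all `s,t,x,y`. -/
def BellSymm (m q : ℕ) (M : Matrix (Fin (m * q)) (Fin (m * q)) ℂ) : Prop :=
  ∀ (s t : Fin q) (x y : Fin m),
    M (idx m q x (negMod s)) (idx m q y (negMod t)) =
      starRingEnd ℂ (M (idx m q x s) (idx m q y t))

/-- The first (most significant) component of an index of `Fin (n₁ * n₂)`,
writing `i = i₁ * n₂ + i₂`. -/
def kHi {n₁ n₂ : ℕ} (i : Fin (n₁ * n₂)) : Fin n₁ :=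
  ⟨i.val / n₂, Nat.div_lt_of_lt_mul (Nat.mul_comm n₁ n₂ ▸ i.isLt)⟩

/-- The second (least significant) component of an index of `Fin (n₁ * n₂)`,
writing `i = i₁ * n₂ + i₂`. -/
def kLo {n₁ n₂ : ℕ} (i : Fin (n₁ * n₂)) : Fin n₂ :=
  ⟨i.val % n₂, by
    have h := i.pos
    rcases Nat.eq_zero_or_pos n₂ with h2 | h2
    · simp [h2] at h
    · exact Nat.mod_lt _ h2⟩

/-- The Kronecker product of `M₁` and `M₂`, indexed by `Fin (n₁ * n₂)`:
`(M₁ ⊗ M₂)_{(i₁ n₂ + i₂),(j₁ n₂ + j₂)} = (M₁)_{i₁ j₁} (M₂)_{i₂ j₂}`. -/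
noncomputable def kron {n₁ n₂ : ℕ} (M₁ : Matrix (Fin n₁) (Fin n₁) ℂ)
    (M₂ : Matrix (Fin n₂) (Fin n₂) ℂ) : Matrix (Fin (n₁ * n₂)) (Fin (n₁ * n₂)) ℂ :=
  fun i j => M₁ (kHi i) (kHi j) * M₂ (kLo i) (kLo j)

/-!
In the product, the index `m₁m₂q·s + x` splits into the row `m₁s + ⌊x / m₂q⌋` of `M₁` and the
row `x mod m₂q` of `M₂`; only the former depends on `s`. So the shift `s ↦ [q - s]_q` acts on
the `M₁` factor alone, where it conjugates, and the real `M₂` factor is its own conjugate.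
-/

theorem kHi_finCongr_idx {m n N q : ℕ} (hN : N = m * n) (h : N * q = m * q * n)
    (x : Fin N) (u : Fin q) :
    kHi (finCongr h (idx N q x u)) = idx m q (kHi (finCongr hN x)) u := by
  subst hN
  have hn : 0 < n := Nat.pos_of_mul_pos_left x.pos
  ext
  change (m * n * u + x) / n = m * u + x / n
  rw [show m * n * u + x = x + m * u * n by ring, Nat.add_mul_div_right _ _ hn,
    Nat.add_comm]

theorem kLo_finCongr_idx {m n N q : ℕ} (hN : N = m * n) (h : N * q = m * q * n)
    (x : Fin N) (u : Fin q) :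
    kLo (finCongr h (idx N q x u)) = kLo (finCongr hN x) := by
  subst hN
  ext
  change (m * n * u + x) % n = x % n
  rw [show m * n * u + x = x + m * u * n by ring, Nat.add_mul_mod_self_right]

theorem kron_reindex_idx_idx {m₁ m₂ N q : ℕ} (hN : N = m₁ * (m₂ * q))
    (h : m₁ * q * (m₂ * q) = N * q)
    (M₁ : Matrix (Fin (m₁ * q)) (Fin (m₁ * q)) ℂ) (M₂ : Matrix (Fin (m₂ * q)) (Fin (m₂ * q)) ℂ)
    (x y : Fin N) (s t : Fin q) :
    Matrix.reindex (finCongr h) (finCongr h) (kron M₁ M₂) (idx N q x s) (idx N q y t) =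
      M₁ (idx m₁ q (kHi (finCongr hN x)) s) (idx m₁ q (kHi (finCongr hN y)) t) *
        M₂ (kLo (finCongr hN x)) (kLo (finCongr hN y)) := by
  simp only [Matrix.reindex_apply, Matrix.submatrix_apply, finCongr_symm, kron,
    kHi_finCongr_idx hN, kLo_finCongr_idx hN]

/-- If `M₁` satisfies the Bell symmetry condition with parameters `(m₁, q)` and
`M₂` is real, then the Kronecker product `M₁ ⊗ M₂` satisfies the Bell symmetry
condition with parameters `(m₁ m₂ q, q)`. -/
theorem kron_bellSymm (q m₁ m₂ : ℕ)
    (M₁ : Matrix (Fin (m₁ * q)) (Fin (m₁ * q)) ℂ)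
    (M₂ : Matrix (Fin (m₂ * q)) (Fin (m₂ * q)) ℂ)
    (h₁ : BellSymm m₁ q M₁)
    (h₂ : ∀ i j, (M₂ i j).im = 0) :
    BellSymm (m₁ * m₂ * q) q
      (Matrix.reindex (finCongr (by ring)) (finCongr (by ring)) (kron M₁ M₂)) := by
  intro s t x y
  have hN : m₁ * m₂ * q = m₁ * (m₂ * q) := by ring
  rw [kron_reindex_idx_idx hN, kron_reindex_idx_idx hN, h₁, map_mul,
    Complex.conj_eq_iff_im.mpr (h₂ _ _)]
end

section
/- Let H be a Hadamard matrix of order n ≥ 1. Then ν(H) = n, hence the excess satisfies Best's bound Σ(H) ≤ n√n; moreover equality Σ(H) = n√n holds if and only if every row sum of H equals √n (i.e. H has constant row sum √n). -/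
/-!
The row-sum vector of `H` is `H *ᵥ 1`, and `HᵀH = n • 1` gives `‖H *ᵥ 1‖² = 1 ⬝ᵥ (HᵀH) *ᵥ 1 = n²`.
For any vector `r` of length `n` with `∑ rᵢ² = n²`, expanding
`∑ (rᵢ - √n)² = 2√n (n√n - ∑ rᵢ)` shows `∑ rᵢ ≤ n√n`, with equality exactly when every `rᵢ = √n`.
-/

open scoped BigOperators
open Matrix Finset

theorem sum_sq_sum_row_of_transpose_mul_self {m ι : Type*} [Fintype m] [Fintype ι] [DecidableEq ι]
    (H : Matrix m ι ℝ) (c : ℝ) (h : Hᵀ * H = c • 1) :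
    ∑ i, (∑ j, H i j) ^ 2 = c * Fintype.card ι := by
  calc ∑ i, (∑ j, H i j) ^ 2 = H *ᵥ 1 ⬝ᵥ H *ᵥ 1 := by simp [dotProduct, mulVec, sq]
    _ = 1 ⬝ᵥ (Hᵀ * H) *ᵥ 1 := by
        rw [← mulVec_mulVec, dotProduct_mulVec (1 : ι → ℝ) Hᵀ, vecMul_transpose]
    _ = c * Fintype.card ι := by simp [h, smul_mulVec, dotProduct, mul_comm]

variable {ι : Type*} [Fintype ι]

theorem sum_sub_sqrt_card_sq (r : ι → ℝ) (h : ∑ i, r i ^ 2 = (Fintype.card ι : ℝ) ^ 2) :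
    ∑ i, (r i - √(Fintype.card ι)) ^ 2 =
      2 * √(Fintype.card ι) * (Fintype.card ι * √(Fintype.card ι) - ∑ i, r i) := by
  have hsq : √(Fintype.card ι : ℝ) ^ 2 = Fintype.card ι := Real.sq_sqrt (Nat.cast_nonneg _)
  simp only [sub_sq, sum_add_distrib, sum_sub_distrib, h, ← sum_mul, ← mul_sum, sum_const, card_univ,
    nsmul_eq_mul]
  linear_combination (-(Fintype.card ι : ℝ)) * hsq

theorem sum_le_card_mul_sqrt_card (r : ι → ℝ) (h : ∑ i, r i ^ 2 = (Fintype.card ι : ℝ) ^ 2) :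
    ∑ i, r i ≤ Fintype.card ι * √(Fintype.card ι) := by
  rcases isEmpty_or_nonempty ι with hι | hι
  · simp
  have hpos : 0 < √(Fintype.card ι : ℝ) := by positivity
  have := sum_sub_sqrt_card_sq r h ▸ sum_nonneg fun i _ => sq_nonneg (r i - √(Fintype.card ι))
  nlinarith

theorem sum_eq_card_mul_sqrt_card_iff (r : ι → ℝ) (h : ∑ i, r i ^ 2 = (Fintype.card ι : ℝ) ^ 2) :
    ∑ i, r i = Fintype.card ι * √(Fintype.card ι) ↔ ∀ i, r i = √(Fintype.card ι) := by
  refine ⟨fun hsum i => ?_, fun hr => by simp [hr]⟩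
  have hzero : ∑ i, (r i - √(Fintype.card ι)) ^ 2 = 0 := by
    rw [sum_sub_sqrt_card_sq r h, hsum, sub_self, mul_zero]
  have := (sum_eq_zero_iff_of_nonneg fun i _ => sq_nonneg _).mp hzero i (mem_univ i)
  linarith [pow_eq_zero_iff two_ne_zero |>.mp this]

theorem hadamard_best_bound_general (n : ℕ)
    (H : Matrix (Fin n) (Fin n) ℝ)
    (horth : Hᵀ * H = (n : ℝ) • 1) :
    Real.sqrt (∑ i, (∑ j, H i j) ^ 2) = n ∧
    (∑ i, ∑ j, H i j) ≤ n * Real.sqrt n ∧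
    ((∑ i, ∑ j, H i j) = n * Real.sqrt n ↔ ∀ i, ∑ j, H i j = Real.sqrt n) := by
  have hrow : ∑ i, (∑ j, H i j) ^ 2 = (Fintype.card (Fin n) : ℝ) ^ 2 := by
    rw [sum_sq_sum_row_of_transpose_mul_self H n horth, Fintype.card_fin, sq]
  refine ⟨?_, ?_, ?_⟩
  · rw [hrow, Fintype.card_fin, Real.sqrt_sq (Nat.cast_nonneg n)]
  · simpa using sum_le_card_mul_sqrt_card _ hrow
  · simpa using sum_eq_card_mul_sqrt_card_iff _ hrow

/-- For a Hadamard matrix of order `n ≥ 1`: `ν(H) = n`, Best's bound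
`Σ(H) ≤ n√n` holds, and equality holds iff every row sum of `H` equals `√n`. -/
theorem hadamard_best_bound (n : ℕ) (hn : 1 ≤ n)
    (H : Matrix (Fin n) (Fin n) ℝ)
    (hent : ∀ i j, H i j = 1 ∨ H i j = -1)
    (horth : Hᵀ * H = (n : ℝ) • 1) :
    Real.sqrt (∑ i, (∑ j, H i j) ^ 2) = n ∧
    (∑ i, ∑ j, H i j) ≤ n * Real.sqrt n ∧
    ((∑ i, ∑ j, H i j) = n * Real.sqrt n ↔ ∀ i, ∑ j, H i j = Real.sqrt n) :=
  hadamard_best_bound_general n H horth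
end

section
/- Let q ≥ 2 be an integer, ω = exp(2πi/q), and let F be the q²×q² complex matrix with entries F_{qs+x, qt+y} = ω^{xt−sy} for 0 ≤ s,t,x,y ≤ q−1. Then the LHV value of the associated Bell inequality (with m = q settings and q outcomes) equals q³: the value q³ is attained by some local deterministic strategy (namely a_x = ω^x, b_y = ω^{−y}), and for every local deterministic strategy (a,b) the real part of the Bell value V(F,a,b) is at most q³. -/
open scoped BigOperators

/-- The Bell value `V(M,a,b) = ∑_{x,y,s,t} M_{ms+x,mt+y} a_x^s b_y^t`. -/
noncomputable def bellValue (m q : ℕ) (M : Matrix (Fin (m * q)) (Fin (m * q)) ℂ)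
    (a b : Fin m → ℂ) : ℂ :=
  ∑ x : Fin m, ∑ y : Fin m, ∑ s : Fin q, ∑ t : Fin q,
    M (idx m q x s) (idx m q y t) * a x ^ s.val * b y ^ t.val

/-!
For `a_x^q = b_y^q = 1` the `(x, y)` block of the Bell value factors as
`(∑_s (a_x ω^{-y})^s) · (∑_t (b_y ω^x)^t)`, and each geometric sum of a `q`-th root of unity is
`q` or `0`. Hence `V = q² · #{(x, y) | a_x = ω^y, b_y ω^x = 1}`. As `ω` is primitive, `a_x`
determines `y`, so there are at most `q` such pairs; the strategy `a_x = ω^x`, `b_y = ω^{-y}`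
realises exactly the diagonal.
-/

open Finset

section RootsOfUnity

variable {K : Type*} [Field K] {q : ℕ}

theorem sum_fin_pow_eq_ite_of_pow_eq_one [DecidableEq K] {z : K} (hz : z ^ q = 1) :
    ∑ s : Fin q, z ^ (s : ℕ) = if z = 1 then (q : K) else 0 := by
  rw [Fin.sum_univ_eq_sum_range (z ^ ·)]
  split_ifs with h
  · simp [h]
  · rw [geom_sum_eq h, hz, sub_self, zero_div]

theorem zpow_mul_sub_mul {ζ : K} (hζ0 : ζ ≠ 0) (x t s y : ℕ) :
    ζ ^ ((x : ℤ) * t - (s : ℤ) * y) = (ζ ^ x) ^ t * ((ζ ^ y) ^ s)⁻¹ := by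
  rw [zpow_sub₀ hζ0, mul_comm (s : ℤ), zpow_mul, zpow_mul]
  simp only [zpow_natCast, div_eq_mul_inv]

theorem sum_sum_zpow_mul_pow_mul_pow [DecidableEq K] {ζ α β : K} (hζ : ζ ^ q = 1)
    (hζ0 : ζ ≠ 0) (hα : α ^ q = 1) (hβ : β ^ q = 1) (x y : ℕ) :
    ∑ s : Fin q, ∑ t : Fin q, ζ ^ ((x : ℤ) * t - (s : ℤ) * y) * α ^ (s : ℕ) * β ^ (t : ℕ) =
      if α = ζ ^ y ∧ β * ζ ^ x = 1 then (q : K) ^ 2 else 0 := by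
  have hζpow (n : ℕ) : (ζ ^ n) ^ q = 1 := by rw [pow_right_comm, hζ, one_pow]
  have hA : (α * (ζ ^ y)⁻¹) ^ q = 1 := by rw [mul_pow, hα, inv_pow, hζpow, inv_one, one_mul]
  have hB : (β * ζ ^ x) ^ q = 1 := by rw [mul_pow, hβ, hζpow, one_mul]
  calc ∑ s : Fin q, ∑ t : Fin q, ζ ^ ((x : ℤ) * t - (s : ℤ) * y) * α ^ (s : ℕ) * β ^ (t : ℕ)
      = (∑ s : Fin q, (α * (ζ ^ y)⁻¹) ^ (s : ℕ)) * ∑ t : Fin q, (β * ζ ^ x) ^ (t : ℕ) := by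
        simp only [sum_mul_sum, zpow_mul_sub_mul hζ0, mul_pow, inv_pow]
        exact sum_congr rfl fun _ _ => sum_congr rfl fun _ _ => by ring
    _ = _ := by
        simp only [sum_fin_pow_eq_ite_of_pow_eq_one hA, sum_fin_pow_eq_ite_of_pow_eq_one hB,
          mul_inv_eq_one₀ (pow_ne_zero _ hζ0)]
        rw [ite_zero_mul_ite_zero, sq]

/-- The pairs of settings `(x, y)` at which both geometric sums in the Bell value survive. -/
def winningPairs [DecidableEq K] (ζ : K) (a b : Fin q → K) : Finset (Fin q × Fin q) :=
  {p | a p.1 = ζ ^ (p.2 : ℕ) ∧ b p.2 * ζ ^ (p.1 : ℕ) = 1}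

variable [DecidableEq K] {ζ : K}

theorem card_winningPairs_le (hζ : IsPrimitiveRoot ζ q) (a b : Fin q → K) :
    #(winningPairs ζ a b) ≤ q := by
  calc #(winningPairs ζ a b) ≤ #(univ : Finset (Fin q)) :=
        card_le_card_of_injOn Prod.fst (fun _ _ => mem_coe.2 (mem_univ _)) ?_
    _ = q := card_fin q
  rintro ⟨x, y⟩ hp ⟨x', y'⟩ hp' (rfl : x = x')
  simp only [winningPairs, coe_filter, mem_univ, true_and, Set.mem_ofPred_eq] at hp hp'
  exact Prod.ext rfl (Fin.ext (hζ.pow_inj y.isLt y'.isLt (hp.1.symm.trans hp'.1)))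

theorem winningPairs_pow_pow_inv (hζ : IsPrimitiveRoot ζ q) :
    winningPairs ζ (fun x : Fin q => ζ ^ (x : ℕ)) (fun y => (ζ ^ (y : ℕ))⁻¹) = univ.diag := by
  ext ⟨x, y⟩
  simp only [winningPairs, mem_filter, mem_univ, true_and, mem_diag]
  constructor
  · exact fun h => Fin.ext (hζ.pow_inj x.isLt y.isLt h.1)
  · rintro rfl
    exact ⟨rfl, inv_mul_cancel₀ (pow_ne_zero _ (hζ.ne_zero (Fin.pos x).ne'))⟩

end RootsOfUnity

theorem bellValue_eq_card_winningPairs {q : ℕ} {ζ : ℂ} (hζ : ζ ^ q = 1) (hζ0 : ζ ≠ 0)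
    (F : Matrix (Fin (q * q)) (Fin (q * q)) ℂ)
    (hF : ∀ s t x y : Fin q,
      F (idx q q x s) (idx q q y t) = ζ ^ ((x : ℤ) * t - (s : ℤ) * y))
    {a b : Fin q → ℂ} (ha : ∀ x, a x ^ q = 1) (hb : ∀ y, b y ^ q = 1) :
    bellValue q q F a b = ((q ^ 2 * #(winningPairs ζ a b) : ℕ) : ℂ) := by
  calc bellValue q q F a b
      = ∑ p : Fin q × Fin q, if p ∈ winningPairs ζ a b then (q : ℂ) ^ 2 else 0 := by
        simp only [bellValue, hF, sum_sum_zpow_mul_pow_mul_pow hζ hζ0 (ha _) (hb _),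
          Fintype.sum_prod_type, winningPairs, mem_filter, mem_univ, true_and]
    _ = _ := by
        rw [sum_ite_mem, univ_inter, sum_const, nsmul_eq_mul]
        push_cast; ring

/-- The LHV value of the Bell inequality associated to the matrix
`F_{qs+x, qt+y} = ω^{xt - sy}` (with `m = q` settings and `q` outcomes) equals `q³`:
the value `q³` is attained by the strategy `a_x = ωˣ`, `b_y = ω⁻ʸ`, and for every
local deterministic strategy the real part of the Bell value is at most `q³`. -/
theorem fourier_lhv_value (q : ℕ) (hq : 2 ≤ q)
    (F : Matrix (Fin (q * q)) (Fin (q * q)) ℂ)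
    (hF : ∀ (s t x y : Fin q),
      F (idx q q x s) (idx q q y t) =
        Complex.exp (2 * Real.pi * Complex.I / q) ^
          ((x.val : ℤ) * t.val - (s.val : ℤ) * y.val)) :
    bellValue q q F
        (fun x => Complex.exp (2 * Real.pi * Complex.I / q) ^ (x.val : ℤ))
        (fun y => Complex.exp (2 * Real.pi * Complex.I / q) ^ (-(y.val : ℤ))) = (q : ℂ) ^ 3 ∧
    ∀ a b : Fin q → ℂ, (∀ x, a x ^ q = 1) → (∀ y, b y ^ q = 1) →
      (bellValue q q F a b).re ≤ (q : ℝ) ^ 3 := by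
  set ω := Complex.exp (2 * Real.pi * Complex.I / q)
  have hω : IsPrimitiveRoot ω q := Complex.isPrimitiveRoot_exp q (by omega)
  have hω0 : ω ≠ 0 := Complex.exp_ne_zero _
  have hωpow (n : ℕ) : (ω ^ n) ^ q = 1 := by rw [pow_right_comm, hω.pow_eq_one, one_pow]
  refine ⟨?_, fun a b ha hb => ?_⟩
  · simp only [zpow_neg, zpow_natCast]
    rw [bellValue_eq_card_winningPairs hω.pow_eq_one hω0 F hF (fun _ => hωpow _)
      (fun _ => by rw [inv_pow, hωpow, inv_one]), winningPairs_pow_pow_inv hω, diag_card,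
      card_univ, Fintype.card_fin]
    push_cast; ring
  · rw [bellValue_eq_card_winningPairs hω.pow_eq_one hω0 F hF ha hb, Complex.natCast_re]
    calc ((q ^ 2 * #(winningPairs ω a b) : ℕ) : ℝ) ≤ ((q ^ 2 * q : ℕ) : ℝ) := by
          gcongr; exact card_winningPairs_le hω a b
      _ = (q : ℝ) ^ 3 := by push_cast; ring
end
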